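/- The homeomorphic embedding relation $\unlhd$ on first-order terms over a finite signature is a well-quasi order: every infinite sequence of terms $t_1, t_2, \ldots$ contains indices $i < j$ with $t_i \unlhd t_j$. -/

import Mathlib

/-- First-order terms over a signature `F` indexed by arity, with variables. -/
inductive Tm (F : ℕ → Type) : Type
  | var : ℕ → Tm F
  | app : (n : ℕ) → F n → (Fin n → Tm F) → Tm F

/-- The homeomorphic embedding relation on terms: all variables are identified,
`s ⊴ f(t₁,…,tₙ)` if `s ⊴ tᵢ` for some `i` (diving), and
`f(s₁,…,sₙ) ⊴ f(t₁,…,tₙ)` if `sᵢ ⊴ tᵢ` for all `i` (coupling). -/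
inductive Emb {F : ℕ → Type} : Tm F → Tm F → Prop
  | var (x y : ℕ) : Emb (.var x) (.var y)
  | dive {s : Tm F} {n : ℕ} (f : F n) (ts : Fin n → Tm F) (i : Fin n) :
      Emb s (ts i) → Emb s (.app n f ts)
  | couple {n : ℕ} (f : F n) (ss ts : Fin n → Tm F) :
      (∀ i, Emb (ss i) (ts i)) → Emb (.app n f ss) (.app n f ts)

/-! Nash-Williams' minimal bad sequence argument. Take a bad sequence `f` that is minimal in
term size at every position. The immediate subterms of the `f k` are well-quasi-ordered: from a bad
sequence `g` of them, with `g k₀` a child of `f M` for the least possible `M`, splicing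
`f 0, …, f (M-1), g k₀, g (k₀+1), …` gives a bad sequence smaller than `f` at `M`. Terms whose
children lie in a wqo set are then well-quasi-ordered, by Dickson's lemma for each of the finitely
many head symbols; so `f` cannot be bad. -/

open Set Set.PartiallyWellOrderedOn

theorem Set.PartiallyWellOrderedOn.iUnion {ι α : Type*} [Finite ι] {r : α → α → Prop}
    {s : ι → Set α} (hs : ∀ i, (s i).PartiallyWellOrderedOn r) :
    (⋃ i, s i).PartiallyWellOrderedOn r := by
  classical
  cases nonempty_fintype ι
  suffices ∀ I : Finset ι, (⋃ i ∈ I, s i).PartiallyWellOrderedOn r by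
    simpa using this Finset.univ
  intro I
  induction I using Finset.induction_on with
  | empty => simp
  | insert a I _ ih => rw [Finset.set_biUnion_insert]; exact (hs a).union ih

variable {F : ℕ → Type}

namespace Tm

def size : Tm F → ℕ
  | .var _ => 1
  | .app n _ ts => 1 + ∑ i : Fin n, size (ts i)

def children : Tm F → Set (Tm F)
  | .var _ => ∅
  | .app _ _ ts => range ts

theorem size_lt_size_of_mem_children {s t : Tm F} (h : s ∈ t.children) : s.size < t.size := by
  cases t with
  | var => simp [children] at h
  | app n f ts =>
    obtain ⟨i, rfl⟩ := h
    have := Finset.single_le_sum (f := fun j => size (ts j)) (fun _ _ => Nat.zero_le _)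
      (Finset.mem_univ i)
    simp only [size]
    omega

end Tm

namespace Emb

theorem refl : ∀ t : Tm F, Emb t t
  | .var x => .var x x
  | .app _ f ts => .couple f ts ts fun i => refl (ts i)

theorem trans {s t u : Tm F} (hst : Emb s t) (htu : Emb t u) : Emb s u := by
  induction htu generalizing s with
  | var => cases hst; exact .var _ _
  | dive f ts i _ ih => exact .dive f ts i (ih hst)
  | couple f ts us _ ih =>
    cases hst with
    | dive _ _ i h => exact .dive f us i (ih i h)
    | couple _ ss _ h => exact .couple f ss us fun i => ih i (h i)

instance : IsPreorder (Tm F) Emb where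
  refl := refl
  trans _ _ _ := trans

theorem of_mem_children {s t u : Tm F} (hs : Emb s t) (ht : t ∈ u.children) : Emb s u := by
  cases u with
  | var => simp [Tm.children] at ht
  | app n f ts =>
    obtain ⟨i, rfl⟩ := ht
    exact .dive f ts i hs

end Emb

theorem partiallyWellOrderedOn_range_var :
    (range (Tm.var : ℕ → Tm F)).PartiallyWellOrderedOn Emb := by
  refine partiallyWellOrderedOn_iff_exists_lt.2 fun g hg => ⟨0, 1, zero_lt_one, ?_⟩
  obtain ⟨x, hx⟩ := hg 0
  obtain ⟨y, hy⟩ := hg 1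
  rw [← hx, ← hy]
  exact .var x y

theorem partiallyWellOrderedOn_setOf_children_subset [Finite (Σ n, F n)] {C : Set (Tm F)}
    (hC : C.PartiallyWellOrderedOn Emb) :
    {t : Tm F | t.children ⊆ C}.PartiallyWellOrderedOn Emb := by
  have happ (a : Σ n, F n) :
      ((Tm.app a.1 a.2) '' univ.pi fun _ => C).PartiallyWellOrderedOn Emb :=
    (PartiallyWellOrderedOn.pi fun _ => hC).image_of_monotone_on
      fun ss _ ts _ h => .couple a.2 ss ts h
  refine (partiallyWellOrderedOn_range_var.union (PartiallyWellOrderedOn.iUnion happ)).mono ?_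
  rintro (x | ⟨n, f, ts⟩) ht
  · exact .inl ⟨x, rfl⟩
  · exact .inr (mem_iUnion.2 ⟨⟨n, f⟩, ts, fun i _ => ht ⟨i, rfl⟩, rfl⟩)

theorem partiallyWellOrderedOn_children_of_isMinBadSeq {f : ℕ → Tm F}
    (hbad : IsBadSeq Emb univ f) (hmin : ∀ n, IsMinBadSeq Emb Tm.size univ n f) :
    (⋃ k, (f k).children).PartiallyWellOrderedOn Emb := by
  rw [iff_forall_not_isBadSeq]
  rintro g ⟨hgC, hgbad⟩
  choose m hm using fun k => mem_iUnion.1 (hgC k)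
  obtain ⟨k₀, hk₀⟩ : ∃ k₀, ∀ k, m k₀ ≤ m k :=
    ⟨Function.argmin m, fun k => Function.argmin_le m k⟩
  set M := m k₀
  let h : ℕ → Tm F := fun i => if i < M then f i else g (k₀ + (i - M))
  refine hmin M h (fun i hi => (if_pos hi).symm) ?_ ⟨fun _ => mem_univ _, fun i j hij hemb => ?_⟩
  · simpa [h] using Tm.size_lt_size_of_mem_children (hm k₀)
  by_cases hj : j < M
  · simp only [h, if_pos hj, if_pos (hij.trans hj)] at hemb
    exact hbad.2 i j hij hemb
  by_cases hi : i < M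
  · simp only [h, if_pos hi, if_neg hj] at hemb
    exact hbad.2 i _ (hi.trans_le (hk₀ _)) (hemb.of_mem_children (hm _))
  · simp only [h, if_neg hi, if_neg hj] at hemb
    exact hgbad _ _ (by omega) hemb

/-- over a finite signature, the homeomorphic embedding is a
well-quasi order: every infinite sequence of terms contains indices `i < j`
with `t i ⊴ t j` (Kruskal's tree theorem / Higman's lemma). -/
theorem emb_wqo {F : ℕ → Type} [Finite (Σ n, F n)] (t : ℕ → Tm F) :
    ∃ i j, i < j ∧ Emb (t i) (t j) := by
  by_contra! hgood
  obtain ⟨f, hbad, hmin⟩ :=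
    exists_min_bad_of_exists_bad Emb Tm.size univ ⟨t, fun _ => mem_univ _, hgood⟩
  have hchildren := partiallyWellOrderedOn_children_of_isMinBadSeq hbad hmin
  obtain ⟨i, j, hij, hemb⟩ := (partiallyWellOrderedOn_setOf_children_subset hchildren).exists_lt
    (f := f) fun k => subset_iUnion (fun k => (f k).children) k
  exact hbad.2 i j hij hemb
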